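/- arXiv:1611.01586 — 6 statements merged into one kernel-verified Lean document; each statement's English description precedes it below -/
import Mathlib

section
/- Let μ be a measure on a measurable space X, let p₁ and p₋₁ be nonnegative measurable probability densities with ∫ p₁ dμ = ∫ p₋₁ dμ = 1, let π ∈ (0,1), and set p = π·p₁ + (1−π)·p₋₁. Let f : ℝ → ℝ be differentiable with derivative f′ satisfying f′(t) < 0 for all t ∈ (0,1) and f′(1) ≤ 0. Define D₂ = {x : p₁(x) > 0 and π·p₁(x) < p(x)}. If the function x ↦ f′(π·p₁(x)/p(x))·p₁(x) (set to 0 where p₁(x) = 0) is μ-integrable and μ(D₂) > 0, then ∫_{p₁>0} f′(π·p₁(x)/p(x))·p₁(x) dμ(x) < 0; that is, the derivative of the partial divergence matching objective Div_f(θ) = ∫ f(θ·p₁/p)·p dμ at θ = π is strictly negative. -/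
open MeasureTheory

/-- The derivative of the partial divergence-matching objective at the true class prior
is strictly negative when the classes overlap on a set of positive measure. -/
theorem partial_matching_derivative_neg
    {X : Type*} [MeasurableSpace X] (μ : Measure X)
    (p₁ pneg : X → ℝ) (hp₁meas : Measurable p₁) (hpnegmeas : Measurable pneg)
    (hp₁nonneg : ∀ x, 0 ≤ p₁ x) (hpnegnonneg : ∀ x, 0 ≤ pneg x)
    (hp₁int : ∫ x, p₁ x ∂μ = 1) (hpnegint : ∫ x, pneg x ∂μ = 1)
    (π : ℝ) (hπ : π ∈ Set.Ioo (0 : ℝ) 1)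
    (p : X → ℝ) (hp : ∀ x, p x = π * p₁ x + (1 - π) * pneg x)
    (f : ℝ → ℝ) (hf : Differentiable ℝ f)
    (hf'neg : ∀ t ∈ Set.Ioo (0 : ℝ) 1, deriv f t < 0)
    (hf'one : deriv f 1 ≤ 0)
    (hint : Integrable
      (fun x => if 0 < p₁ x then deriv f (π * p₁ x / p x) * p₁ x else 0) μ)
    (hD₂ : 0 < μ {x | 0 < p₁ x ∧ π * p₁ x < p x}) :
    ∫ x in {x | 0 < p₁ x}, deriv f (π * p₁ x / p x) * p₁ x ∂μ < 0 := by
  obtain ⟨hπ0, hπ1⟩ := hπ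
  have hpmeas : Measurable p := by
    have hpe : p = fun x => π * p₁ x + (1 - π) * pneg x := funext hp
    rw [hpe]
    exact (hp₁meas.const_mul _).add (hpnegmeas.const_mul _)
  set g : X → ℝ := fun x => deriv f (π * p₁ x / p x) * p₁ x with hg
  set s : Set X := {x | 0 < p₁ x} with hs
  set D : Set X := {x | 0 < p₁ x ∧ π * p₁ x < p x} with hD
  have hsmeas : MeasurableSet s := measurableSet_lt measurable_const hp₁meas
  have hDmeas : MeasurableSet D := by
    have : D = {x | 0 < p₁ x} ∩ {x | π * p₁ x < p x} := by
      ext x; simp [hD, Set.mem_setOf_eq]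
    rw [this]
    exact hsmeas.inter (measurableSet_lt (hp₁meas.const_mul π) hpmeas)
  have hDs : D ⊆ s := fun x hx => hx.1
  -- pointwise facts on s
  have hps : ∀ x ∈ s, 0 < p x := by
    intro x hx
    rw [hp x]
    have h1 : 0 < π * p₁ x := mul_pos hπ0 hx
    have h2 : 0 ≤ (1 - π) * pneg x := mul_nonneg (by linarith) (hpnegnonneg x)
    linarith
  have hratio : ∀ x ∈ s, π * p₁ x / p x ∈ Set.Ioc (0 : ℝ) 1 := by
    intro x hx
    have hpx := hps x hx
    constructor
    · exact div_pos (mul_pos hπ0 hx) hpx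
    · rw [div_le_one hpx, hp x]
      have h2 : 0 ≤ (1 - π) * pneg x := mul_nonneg (by linarith) (hpnegnonneg x)
      linarith
  have hgnonpos : ∀ x ∈ s, g x ≤ 0 := by
    intro x hx
    have hr := hratio x hx
    have hd : deriv f (π * p₁ x / p x) ≤ 0 := by
      rcases lt_or_eq_of_le hr.2 with h | h
      · exact (hf'neg _ ⟨hr.1, h⟩).le
      · rw [h]; exact hf'one
    exact mul_nonpos_of_nonpos_of_nonneg hd (hp₁nonneg x)
  have hgD : ∀ x ∈ D, g x < 0 := by
    intro x hx
    have hr := hratio x (hDs hx)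
    have hlt : π * p₁ x / p x < 1 := (div_lt_one (hps x (hDs hx))).2 hx.2
    exact mul_neg_of_neg_of_pos (hf'neg _ ⟨hr.1, hlt⟩) hx.1
  -- integrability
  have hgs : IntegrableOn g s μ := by
    refine hint.integrableOn.congr_fun (fun x hx => ?_) hsmeas
    simp [hs, Set.mem_setOf_eq] at hx
    simp [hg, hx]
  have hgDint : IntegrableOn g D μ := hgs.mono_set hDs
  -- ∫_s g ≤ ∫_D g
  have hstep : ∫ x in s, g x ∂μ ≤ ∫ x in D, g x ∂μ := by
    have hmono : ∫ x in D, (-g) x ∂μ ≤ ∫ x in s, (-g) x ∂μ := by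
      refine setIntegral_mono_set hgs.neg ?_ (HasSubset.Subset.eventuallyLE hDs)
      exact (ae_restrict_iff' hsmeas).2 (Filter.Eventually.of_forall
        (fun x hx => neg_nonneg.2 (hgnonpos x hx)))
    simp only [Pi.neg_apply, integral_neg] at hmono
    linarith
  -- ∫_D g < 0
  have hDneg : ∫ x in D, g x ∂μ < 0 := by
    have hpos : 0 < ∫ x in D, (-g) x ∂μ := by
      rw [setIntegral_pos_iff_support_of_nonneg_ae]
      · refine lt_of_lt_of_le hD₂ (measure_mono ?_)
        intro x hx
        exact ⟨by simpa using (hgD x hx).ne, hx⟩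
      · exact (ae_restrict_iff' hDmeas).2 (Filter.Eventually.of_forall
          (fun x hx => neg_nonneg.2 (hgnonpos x (hDs hx))))
      · exact hgDint.neg
    simp only [Pi.neg_apply, integral_neg] at hpos
    linarith
  linarith
end

section
/- Let μ be a measure on a measurable space X, let p₁ and p₋₁ be nonnegative measurable probability densities with ∫ p₁ dμ = ∫ p₋₁ dμ = 1, let π ∈ (0,1), and set p = π·p₁ + (1−π)·p₋₁. Let f : ℝ → ℝ be convex and differentiable with f′(t) < 0 for all t ∈ (0,1) and f′(1) ≤ 0. Define D₂ = {x : p₁(x) > 0 and π·p₁(x) < p(x)} and Div_f(θ) = ∫_{p>0} f(θ·p₁(x)/p(x))·p(x) dμ(x). Assume that for every θ ∈ [0,1] the integral Div_f(θ) is finite, that Div_f is differentiable at π with derivative ∫_{p₁>0} f′(π·p₁/p)·p₁ dμ, and that this integrand is μ-integrable. If μ(D₂) > 0, then every minimizer θ* of Div_f over [0,1] satisfies θ* > π; i.e., partial distribution matching under an f-divergence systematically overestimates the class prior when the classes overlap. -/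
open MeasureTheory

/-- Tangent line inequality for a convex differentiable function on ℝ. -/
lemma convex_tangent_le {f : ℝ → ℝ} (hfconv : ConvexOn ℝ Set.univ f)
    (hf : Differentiable ℝ f) (a b : ℝ) :
    f a + deriv f a * (b - a) ≤ f b := by
  rcases lt_trichotomy a b with h | h | h
  · have := hfconv.deriv_le_slope (Set.mem_univ a) (Set.mem_univ b) h (hf a)
    rw [slope_def_field] at this
    have hba : 0 < b - a := by linarith
    rw [le_div_iff₀ hba] at this
    nlinarith
  · simp [h]
  · have := hfconv.slope_le_deriv (Set.mem_univ b) (Set.mem_univ a) h (hf a)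
    rw [slope_def_field] at this
    have hab : 0 < a - b := by linarith
    rw [div_le_iff₀ hab] at this
    nlinarith

/-- Partial distribution matching under an f-divergence systematically overestimates
the class prior when the classes overlap. -/
theorem partial_matching_overestimates
    {X : Type*} [MeasurableSpace X] (μ : Measure X)
    (p₁ pneg : X → ℝ) (hp₁meas : Measurable p₁) (hpnegmeas : Measurable pneg)
    (hp₁nonneg : ∀ x, 0 ≤ p₁ x) (hpnegnonneg : ∀ x, 0 ≤ pneg x)
    (hp₁int : ∫ x, p₁ x ∂μ = 1) (hpnegint : ∫ x, pneg x ∂μ = 1)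
    (π : ℝ) (hπ : π ∈ Set.Ioo (0 : ℝ) 1)
    (p : X → ℝ) (hp : ∀ x, p x = π * p₁ x + (1 - π) * pneg x)
    (f : ℝ → ℝ) (hfconv : ConvexOn ℝ Set.univ f) (hf : Differentiable ℝ f)
    (hf'neg : ∀ t ∈ Set.Ioo (0 : ℝ) 1, deriv f t < 0)
    (hf'one : deriv f 1 ≤ 0)
    (Div : ℝ → ℝ)
    (hDiv : ∀ θ, Div θ = ∫ x in {x | 0 < p x}, f (θ * p₁ x / p x) * p x ∂μ)
    (hDivInt : ∀ θ ∈ Set.Icc (0 : ℝ) 1,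
      IntegrableOn (fun x => f (θ * p₁ x / p x) * p x) {x | 0 < p x} μ)
    (hDeriv : HasDerivAt Div
      (∫ x in {x | 0 < p₁ x}, deriv f (π * p₁ x / p x) * p₁ x ∂μ) π)
    (hDerivInt : IntegrableOn
      (fun x => deriv f (π * p₁ x / p x) * p₁ x) {x | 0 < p₁ x} μ)
    (hD₂ : 0 < μ {x | 0 < p₁ x ∧ π * p₁ x < p x}) :
    ∀ θstar ∈ Set.Icc (0 : ℝ) 1,
      (∀ θ ∈ Set.Icc (0 : ℝ) 1, Div θstar ≤ Div θ) → π < θstar := by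
  obtain ⟨hπ0, hπ1⟩ := hπ
  set A : Set X := {x | 0 < p₁ x} with hA
  set P : Set X := {x | 0 < p x} with hP
  set D : Set X := {x | 0 < p₁ x ∧ π * p₁ x < p x} with hD
  set g : X → ℝ := fun x => deriv f (π * p₁ x / p x) * p₁ x with hg
  set c : ℝ := ∫ x in A, g x ∂μ with hc
  have hpmeas : Measurable p := by
    have : p = fun x => π * p₁ x + (1 - π) * pneg x := funext hp
    rw [this]; exact (hp₁meas.const_mul π).add (hpnegmeas.const_mul (1 - π))
  have hple : ∀ x, π * p₁ x ≤ p x := by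
    intro x; rw [hp x]
    nlinarith [hpnegnonneg x, hp₁nonneg x]
  have hAP : A ⊆ P := by
    intro x hx
    have : 0 < π * p₁ x := mul_pos hπ0 hx
    exact lt_of_lt_of_le this (hple x)
  have hAmeas : MeasurableSet A := measurableSet_lt measurable_const hp₁meas
  have hPmeas : MeasurableSet P := measurableSet_lt measurable_const hpmeas
  have hDmeas : MeasurableSet D := by
    have : D = A ∩ {x | π * p₁ x < p x} := rfl
    rw [this]
    exact hAmeas.inter (measurableSet_lt (hp₁meas.const_mul π) hpmeas)
  have hgmeas : Measurable g :=
    ((measurable_deriv f).comp ((hp₁meas.const_mul π).div hpmeas)).mul hp₁meas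
  -- ratio properties on A
  have hratio : ∀ x ∈ A, 0 < π * p₁ x / p x ∧ π * p₁ x / p x ≤ 1 := by
    intro x hx
    have hpx : 0 < p x := hAP hx
    constructor
    · exact div_pos (mul_pos hπ0 hx) hpx
    · exact div_le_one_of_le₀ (hple x) hpx.le
  have hgnonposA : ∀ x ∈ A, g x ≤ 0 := by
    intro x hx
    obtain ⟨h0, h1⟩ := hratio x hx
    have hd : deriv f (π * p₁ x / p x) ≤ 0 := by
      rcases lt_or_eq_of_le h1 with h | h
      · exact (hf'neg _ ⟨h0, h⟩).le
      · rw [h]; exact hf'one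
    exact mul_nonpos_of_nonpos_of_nonneg hd (hp₁nonneg x)
  have hgnegD : ∀ x ∈ D, g x < 0 := by
    intro x hx
    obtain ⟨hx1, hx2⟩ := hx
    have hpx : 0 < p x := lt_of_le_of_lt (by positivity) hx2
    have h0 : 0 < π * p₁ x / p x := div_pos (mul_pos hπ0 hx1) hpx
    have h1 : π * p₁ x / p x < 1 := (div_lt_one hpx).mpr hx2
    exact mul_neg_of_neg_of_pos (hf'neg _ ⟨h0, h1⟩) hx1
  have hDA : D ⊆ A := fun x hx => hx.1
  -- c < 0
  have hcneg : c < 0 := by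
    have hsplit : A = D ∪ (A \ D) := (Set.union_diff_cancel hDA).symm
    have hIntD : IntegrableOn g D μ := hDerivInt.mono_set hDA
    have hIntAD : IntegrableOn g (A \ D) μ := hDerivInt.mono_set Set.diff_subset
    have hdisj : Disjoint D (A \ D) := Set.disjoint_sdiff_right
    have heq : c = (∫ x in D, g x ∂μ) + ∫ x in A \ D, g x ∂μ := by
      rw [hc]
      conv_lhs => rw [hsplit]
      exact setIntegral_union hdisj (hAmeas.diff hDmeas) hIntD hIntAD
    have h2 : (∫ x in A \ D, g x ∂μ) ≤ 0 :=
      setIntegral_nonpos (hAmeas.diff hDmeas) (fun x hx => hgnonposA x hx.1)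
    have h1 : (∫ x in D, g x ∂μ) < 0 := by
      have hpos : 0 < ∫ x in D, (-g) x ∂μ := by
        rw [setIntegral_pos_iff_support_of_nonneg_ae]
        · have : Function.support (-g) ∩ D = D := by
            apply Set.inter_eq_right.mpr
            intro x hx
            simp only [Function.mem_support, Pi.neg_apply, ne_eq, neg_eq_zero]
            exact (hgnegD x hx).ne
          rw [this]; exact hD₂
        · filter_upwards [ae_restrict_mem hDmeas] with x hx
          simp only [Pi.neg_apply, Pi.zero_apply]
          linarith [hgnegD x hx]
        · exact hIntD.neg
      have : (∫ x in D, (-g) x ∂μ) = -∫ x in D, g x ∂μ := by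
        simp [integral_neg]
      linarith [this ▸ hpos]
    linarith [heq ▸ add_lt_add_of_lt_of_le h1 h2]
  -- ∫ over P of g equals c
  have hIntgP : IntegrableOn g P μ := by
    have h0 : IntegrableOn g (P \ A) μ := by
      apply (integrableOn_congr_fun (g := fun _ => (0:ℝ)) ?_ (hPmeas.diff hAmeas)).mpr
        (integrableOn_zero)
      intro x hx
      have : p₁ x = 0 := le_antisymm (not_lt.mp hx.2) (hp₁nonneg x)
      simp [hg, this]
    have := hDerivInt.union h0
    rwa [Set.union_diff_cancel hAP] at this
  have hintgP : (∫ x in P, g x ∂μ) = c := by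
    have hsplit : P = A ∪ (P \ A) := (Set.union_diff_cancel hAP).symm
    have h0 : IntegrableOn g (P \ A) μ := hIntgP.mono_set Set.diff_subset
    rw [hsplit, setIntegral_union Set.disjoint_sdiff_right (hPmeas.diff hAmeas) hDerivInt h0]
    have : (∫ x in P \ A, g x ∂μ) = 0 := by
      rw [setIntegral_congr_fun (hPmeas.diff hAmeas) (g := fun _ => (0:ℝ))]
      · simp
      · intro x hx
        have : p₁ x = 0 := le_antisymm (not_lt.mp hx.2) (hp₁nonneg x)
        simp [hg, this]
    rw [this, add_zero]
  -- tangent inequality: Div π + (θ - π) * c ≤ Div θ for θ ∈ [0,1]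
  have htangent : ∀ θ ∈ Set.Icc (0:ℝ) 1, Div π + (θ - π) * c ≤ Div θ := by
    intro θ hθ
    have hπmem : π ∈ Set.Icc (0:ℝ) 1 := ⟨hπ0.le, hπ1.le⟩
    have hptwise : ∀ x ∈ P,
        f (π * p₁ x / p x) * p x + (θ - π) * g x ≤ f (θ * p₁ x / p x) * p x := by
      intro x hx
      have hpx : 0 < p x := hx
      have htan := convex_tangent_le hfconv hf (π * p₁ x / p x) (θ * p₁ x / p x)
      have hdiff : θ * p₁ x / p x - π * p₁ x / p x = (θ - π) * (p₁ x / p x) := by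
        field_simp
      rw [hdiff] at htan
      have hmul := mul_le_mul_of_nonneg_right htan hpx.le
      calc f (π * p₁ x / p x) * p x + (θ - π) * g x
          = (f (π * p₁ x / p x) + deriv f (π * p₁ x / p x) * ((θ - π) * (p₁ x / p x))) * p x := by
            rw [hg]; field_simp
        _ ≤ f (θ * p₁ x / p x) * p x := hmul
    have hlhsInt : IntegrableOn
        (fun x => f (π * p₁ x / p x) * p x + (θ - π) * g x) P μ :=
      (hDivInt π hπmem).add (hIntgP.const_mul _)
    have hmono := setIntegral_mono_on hlhsInt (hDivInt θ hθ) hPmeas hptwise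
    rw [integral_add (hDivInt π hπmem) (hIntgP.const_mul _)] at hmono
    rw [integral_const_mul, hintgP] at hmono
    rw [hDiv π, hDiv θ]
    exact hmono
  -- main argument
  intro θstar hθstar hmin
  by_contra hcon
  push_neg at hcon
  -- Div π ≤ Div θstar
  have h1 : Div π ≤ Div θstar := by
    have := htangent θstar hθstar
    nlinarith
  -- find θ ∈ (π, 1) with Div θ < Div π
  have htend : Filter.Tendsto (slope Div π) (nhdsWithin π {π}ᶜ) (nhds c) :=
    hasDerivAt_iff_tendsto_slope.mp hDeriv
  have hle : nhdsWithin π (Set.Ioi π) ≤ nhdsWithin π {π}ᶜ :=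
    nhdsWithin_mono π (fun y hy => ne_of_gt hy)
  have hev1 : ∀ᶠ θ in nhdsWithin π (Set.Ioi π), slope Div π θ < 0 :=
    ((htend.mono_left hle).eventually_lt_const hcneg)
  have hev2 : ∀ᶠ θ in nhdsWithin π (Set.Ioi π), θ ∈ Set.Ioo π 1 :=
    Filter.eventually_of_mem (Ioo_mem_nhdsGT_of_mem ⟨le_refl π, hπ1⟩) (fun _ h => h)
  obtain ⟨θ, hslope, hθmem⟩ := (hev1.and hev2).exists
  have hθπ : π < θ := hθmem.1
  have hDivθ : Div θ < Div π := by
    rw [slope_def_field, div_neg_iff] at hslope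
    rcases hslope with ⟨h, h'⟩ | ⟨h, h'⟩
    · linarith
    · linarith
  have hθIcc : θ ∈ Set.Icc (0:ℝ) 1 := ⟨le_of_lt (lt_trans hπ0 hθπ), hθmem.2.le⟩
  have := hmin θ hθIcc
  linarith
end

section
/- Let μ be a measure on a measurable space X, let p₁ and p₋₁ be nonnegative measurable probability densities with ∫ p₁ dμ = ∫ p₋₁ dμ = 1, let π ∈ (0,1), and set p = π·p₁ + (1−π)·p₋₁. For c > 0 define f_c : [0,∞) → ℝ by f_c(t) = −(t−1) for t ≤ 1 and f_c(t) = c·(t−1) for t > 1, and define Div(θ) = ∫_{p>0} f_c(θ·p₁(x)/p(x))·p(x) dμ(x) for θ ∈ [0,1]. Define D₁ = {x : p₁(x) > 0 and π·p₁(x) = p(x)} and D₂ = {x : p₁(x) > 0 and π·p₁(x) < p(x)}. Then π is a global minimizer of Div over [0,1] if and only if c·∫_{D₁} p₁ dμ ≥ ∫_{D₂} p₁ dμ. -/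
/-!
With `hinge c u = max (-u) (c * u)` one has `f_c t = hinge c (t - 1)`, hence by homogeneity
`Div θ = ∫ hinge c (θ p₁ - p) dμ`. Since `π p₁ ≤ p`, the argument is nonpositive for `θ ≤ π`,
where `hinge c` is decreasing, so only `θ > π` matters. As `hinge c` is Lipschitz, dominated
convergence gives `Div` the right derivative `d = ∫ p₁ · hingeRightDeriv c (π p₁ - p)` at `π`;
since `π p₁ - p` vanishes on `D₁` and is negative on `D₂`, `d = c ∫_{D₁} p₁ - ∫_{D₂} p₁`.
A minimum at `π < 1` forces `d ≥ 0`; conversely `hinge c` is convex with subgradient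
`hingeRightDeriv c`, which integrates to `Div θ ≥ Div π + (θ - π) d`.
-/

open MeasureTheory Set Filter Topology

noncomputable def hinge (c u : ℝ) : ℝ := max (-u) (c * u)

noncomputable def hingeRightDeriv (c u : ℝ) : ℝ := if u < 0 then -1 else c

lemma HasDerivWithinAt.nonneg_of_isLocalMinOn {f : ℝ → ℝ} {f' a : ℝ}
    (hf : HasDerivWithinAt f f' (Ioi a) a) (hmin : IsLocalMinOn f (Ioi a) a) : 0 ≤ f' := by
  rw [hasDerivWithinAt_iff_tendsto_slope' (s := Ioi a) (lt_irrefl a)] at hf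
  refine ge_of_tendsto hf ?_
  filter_upwards [hmin, self_mem_nhdsWithin] with x hx hax
  rw [slope_def_field]
  exact div_nonneg (sub_nonneg.mpr hx) (sub_nonneg.mpr (le_of_lt hax))

section Hinge

variable {c : ℝ}

lemma hinge_of_nonpos (hc : -1 ≤ c) {u : ℝ} (hu : u ≤ 0) : hinge c u = -u :=
  max_eq_left (by nlinarith)

lemma hinge_of_nonneg (hc : -1 ≤ c) {u : ℝ} (hu : 0 ≤ u) : hinge c u = c * u :=
  max_eq_right (by nlinarith)

lemma hinge_antitoneOn (hc : -1 ≤ c) : AntitoneOn (hinge c) (Iic 0) := fun u hu v hv huv => by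
  rw [hinge_of_nonpos hc hu, hinge_of_nonpos hc hv]
  linarith

lemma hinge_sub_one (hc : -1 ≤ c) (t : ℝ) :
    hinge c (t - 1) = if t ≤ 1 then -(t - 1) else c * (t - 1) := by
  split_ifs with ht
  · exact hinge_of_nonpos hc (by linarith)
  · exact hinge_of_nonneg hc (by linarith)

lemma hinge_mul {k : ℝ} (hk : 0 ≤ k) (u : ℝ) : hinge c u * k = hinge c (u * k) := by
  simp only [hinge, max_mul_of_nonneg _ _ hk, neg_mul, mul_assoc]

lemma continuous_hinge (c : ℝ) : Continuous (hinge c) :=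
  continuous_neg.max (continuous_const_mul c)

lemma measurable_hingeRightDeriv (c : ℝ) : Measurable (hingeRightDeriv c) :=
  Measurable.ite measurableSet_Iio measurable_const measurable_const

lemma abs_hinge_sub_le (u v : ℝ) : |hinge c u - hinge c v| ≤ max 1 |c| * |u - v| := by
  calc |hinge c u - hinge c v| ≤ max |-u - -v| |c * u - c * v| := abs_max_sub_max_le_max _ _ _ _
    _ = max 1 |c| * |u - v| := by
      rw [← mul_sub, abs_mul, max_mul_of_nonneg _ _ (abs_nonneg _), one_mul, neg_sub_neg,
        abs_sub_comm]

lemma abs_hingeRightDeriv_le (u : ℝ) : |hingeRightDeriv c u| ≤ max 1 |c| := by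
  unfold hingeRightDeriv
  split_ifs <;> simp

lemma hinge_add_mul_hingeRightDeriv_le (hc : -1 ≤ c) (u s : ℝ) :
    hinge c u + s * hingeRightDeriv c u ≤ hinge c (u + s) := by
  unfold hingeRightDeriv
  split_ifs with hu
  · calc hinge c u + s * -1 = -(u + s) := by rw [hinge_of_nonpos hc hu.le]; ring
      _ ≤ hinge c (u + s) := le_max_left _ _
  · calc hinge c u + s * c = c * (u + s) := by rw [hinge_of_nonneg hc (not_lt.mp hu)]; ring
      _ ≤ hinge c (u + s) := le_max_right _ _

lemma hasDerivWithinAt_hinge_mul_sub (hc : -1 ≤ c) {a b : ℝ} (hb : 0 ≤ b) (π : ℝ) :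
    HasDerivWithinAt (fun θ => hinge c (θ * b - a)) (b * hingeRightDeriv c (π * b - a))
      (Ioi π) π := by
  have hlin : HasDerivAt (fun θ : ℝ => θ * b - a) b π := by
    simpa using ((hasDerivAt_id π).mul_const b).sub_const a
  unfold hingeRightDeriv
  split_ifs with hu
  · have hev : (fun θ => hinge c (θ * b - a)) =ᶠ[𝓝 π] fun θ => -(θ * b - a) := by
      filter_upwards [hlin.continuousAt.eventually (gt_mem_nhds hu)] with θ hθ
      exact hinge_of_nonpos hc hθ.le
    simpa using (hlin.neg.congr_of_eventuallyEq hev).hasDerivWithinAt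
  · have hnonneg : ∀ θ ∈ Ici π, 0 ≤ θ * b - a := fun θ hθ => by
      nlinarith [mem_Ici.mp hθ]
    rw [mul_comm]
    exact ((hlin.const_mul c).hasDerivWithinAt.congr
      (fun θ hθ => hinge_of_nonneg hc (hnonneg θ (Ioi_subset_Ici_self hθ)))
      (hinge_of_nonneg hc (hnonneg π (mem_Ici.2 le_rfl))))

end Hinge

section Integral

variable {α : Type*} [MeasurableSpace α] {ν : Measure α} {a b : α → ℝ} {c : ℝ}

lemma MeasureTheory.Integrable.hinge_mul_sub (ha : Integrable a ν) (hb : Integrable b ν)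
    (θ : ℝ) :
    Integrable (fun x => hinge c (θ * b x - a x)) ν := by
  have hlin : Integrable (fun x => θ * b x - a x) ν := (hb.const_mul θ).sub ha
  refine (hlin.norm.const_mul (max 1 |c|)).mono'
    ((continuous_hinge c).comp_aestronglyMeasurable hlin.aestronglyMeasurable) ?_
  filter_upwards with x
  simpa [hinge] using abs_hinge_sub_le (c := c) (θ * b x - a x) 0

lemma MeasureTheory.Integrable.mul_hingeRightDeriv (ha : Integrable a ν) (hb : Integrable b ν)
    (π : ℝ) :
    Integrable (fun x => b x * hingeRightDeriv c (π * b x - a x)) ν :=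
  hb.mul_bdd ((measurable_hingeRightDeriv c).comp_aemeasurable
      ((hb.const_mul π).sub ha).aemeasurable).aestronglyMeasurable
    (Eventually.of_forall fun _ => abs_hingeRightDeriv_le _)

lemma integral_hinge_add_mul_le (hc : -1 ≤ c) (ha : Integrable a ν) (hb : Integrable b ν)
    (π θ : ℝ) :
    ∫ x, hinge c (π * b x - a x) ∂ν +
        (θ - π) * ∫ x, b x * hingeRightDeriv c (π * b x - a x) ∂ν ≤
      ∫ x, hinge c (θ * b x - a x) ∂ν := by
  rw [← integral_const_mul, ← integral_add (ha.hinge_mul_sub hb π)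
    ((ha.mul_hingeRightDeriv hb π).const_mul _)]
  refine integral_mono ((ha.hinge_mul_sub hb π).add ((ha.mul_hingeRightDeriv hb π).const_mul _))
    (ha.hinge_mul_sub hb θ) fun x => ?_
  have h := hinge_add_mul_hingeRightDeriv_le hc (π * b x - a x) ((θ - π) * b x)
  rwa [show π * b x - a x + (θ - π) * b x = θ * b x - a x by ring, mul_assoc] at h

lemma hasDerivWithinAt_integral_hinge_mul_sub (hc : -1 ≤ c) (ha : Integrable a ν)
    (hb : Integrable b ν) (hb0 : ∀ x, 0 ≤ b x) (π : ℝ) :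
    HasDerivWithinAt (fun θ => ∫ x, hinge c (θ * b x - a x) ∂ν)
      (∫ x, b x * hingeRightDeriv c (π * b x - a x) ∂ν) (Ioi π) π := by
  rw [hasDerivWithinAt_iff_tendsto_slope' (s := Ioi π) (lt_irrefl π)]
  have hslope : ∀ θ, slope (fun θ => ∫ x, hinge c (θ * b x - a x) ∂ν) π θ =
      ∫ x, (hinge c (θ * b x - a x) - hinge c (π * b x - a x)) / (θ - π) ∂ν := fun θ => by
    rw [slope_def_field, integral_div,
      integral_sub (ha.hinge_mul_sub hb θ) (ha.hinge_mul_sub hb π)]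
  refine (tendsto_congr hslope).2 ?_
  refine tendsto_integral_filter_of_dominated_convergence (fun x => max 1 |c| * |b x|)
    (Eventually.of_forall fun θ =>
      (((ha.hinge_mul_sub hb θ).sub (ha.hinge_mul_sub hb π)).div_const _).aestronglyMeasurable)
    ?_ (hb.abs.const_mul _) (Eventually.of_forall fun x => ?_)
  · filter_upwards [self_mem_nhdsWithin] with θ (hθ : π < θ)
    refine Eventually.of_forall fun x => ?_
    rw [Real.norm_eq_abs, abs_div, div_le_iff₀ (abs_pos.2 (sub_ne_zero.2 hθ.ne'))]
    calc _ ≤ max 1 |c| * |θ * b x - a x - (π * b x - a x)| := abs_hinge_sub_le _ _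
      _ = max 1 |c| * |b x| * |θ - π| := by
        rw [show θ * b x - a x - (π * b x - a x) = (θ - π) * b x by ring, abs_mul]; ring
  · have h := (hasDerivWithinAt_iff_tendsto_slope' (s := Ioi π) (lt_irrefl π)).1
      (hasDerivWithinAt_hinge_mul_sub hc (a := a x) (hb0 x) π)
    exact (tendsto_congr fun θ => slope_def_field _ _ _).1 h

variable (c) in
lemma integral_mul_hingeRightDeriv (hb : Integrable b ν) (hameas : Measurable a)
    (hbmeas : Measurable b) (hb0 : ∀ x, 0 ≤ b x) {π : ℝ} (hba : ∀ x, π * b x ≤ a x) :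
    ∫ x, b x * hingeRightDeriv c (π * b x - a x) ∂ν =
      c * ∫ x in {x | 0 < b x ∧ π * b x = a x}, b x ∂ν -
        ∫ x in {x | 0 < b x ∧ π * b x < a x}, b x ∂ν := by
  set D₁ := {x | 0 < b x ∧ π * b x = a x}
  set D₂ := {x | 0 < b x ∧ π * b x < a x}
  have hD₁ : MeasurableSet D₁ := (measurableSet_lt measurable_const hbmeas).inter
    (measurableSet_eq_fun (hbmeas.const_mul π) hameas)
  have hD₂ : MeasurableSet D₂ := (measurableSet_lt measurable_const hbmeas).inter
    (measurableSet_lt (hbmeas.const_mul π) hameas)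
  have hpt : ∀ x, b x * hingeRightDeriv c (π * b x - a x) =
      c * D₁.indicator b x - D₂.indicator b x := by
    intro x
    simp only [hingeRightDeriv, indicator_apply, D₁, D₂, mem_ofPred_eq]
    rcases (hb0 x).eq_or_lt with h0 | hpos
    · simp [← h0]
    · rcases (hba x).eq_or_lt with heq | hlt
      · simp [hpos, heq, mul_comm]
      · simp [hpos, hlt, hlt.ne, sub_neg.2 hlt]
  rw [integral_congr_ae (Eventually.of_forall hpt),
    integral_sub ((hb.indicator hD₁).const_mul c) (hb.indicator hD₂), integral_const_mul,
    integral_indicator hD₁, integral_indicator hD₂]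

lemma integral_hinge_mul_sub_le_of_le (hc : -1 ≤ c) (ha : Integrable a ν) (hb : Integrable b ν)
    (hb0 : ∀ x, 0 ≤ b x) {π θ : ℝ} (hba : ∀ x, π * b x ≤ a x) (hθ : θ ≤ π) :
    ∫ x, hinge c (π * b x - a x) ∂ν ≤ ∫ x, hinge c (θ * b x - a x) ∂ν := by
  refine integral_mono (ha.hinge_mul_sub hb π) (ha.hinge_mul_sub hb θ) fun x => ?_
  have hθx : θ * b x ≤ π * b x := mul_le_mul_of_nonneg_right hθ (hb0 x)
  exact hinge_antitoneOn hc (sub_nonpos.2 (hθx.trans (hba x))) (sub_nonpos.2 (hba x))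
    (by linarith)

lemma setIntegral_hinge_div_sub_one_mul (ha : Measurable a) {π : ℝ} (hπ : 0 < π)
    (hb0 : ∀ x, 0 ≤ b x) (hba : ∀ x, π * b x ≤ a x) (θ : ℝ) :
    ∫ x in {x | 0 < a x}, hinge c (θ * b x / a x - 1) * a x ∂ν =
      ∫ x, hinge c (θ * b x - a x) ∂ν := by
  rw [setIntegral_congr_fun (measurableSet_lt measurable_const ha) fun x (hx : 0 < a x) => ?_,
    setIntegral_eq_integral_of_forall_compl_eq_zero (s := {x | 0 < a x}) fun x hx => ?_]
  · have hx : a x ≤ 0 := not_lt.1 hx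
    have hbx : b x = 0 := by nlinarith [hba x, hb0 x]
    have hax : a x = 0 := by nlinarith [hba x, hb0 x]
    simp [hbx, hax, hinge]
  · rw [hinge_mul hx.le]
    congr 1
    field_simp

end Integral

/-- The true class prior π is a global minimizer of the partial matching objective
under the penalized L₁-type divergence f_c if and only if
c·∫_{D₁} p₁ dμ ≥ ∫_{D₂} p₁ dμ. -/
theorem penalized_L1_minimizer_iff
    {X : Type*} [MeasurableSpace X] (μ : Measure X)
    (p₁ pneg : X → ℝ) (hp₁meas : Measurable p₁) (hpnegmeas : Measurable pneg)
    (hp₁nonneg : ∀ x, 0 ≤ p₁ x) (hpnegnonneg : ∀ x, 0 ≤ pneg x)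
    (hp₁int : ∫ x, p₁ x ∂μ = 1) (hpnegint : ∫ x, pneg x ∂μ = 1)
    (π : ℝ) (hπ : π ∈ Set.Ioo (0 : ℝ) 1)
    (p : X → ℝ) (hp : ∀ x, p x = π * p₁ x + (1 - π) * pneg x)
    (c : ℝ) (hc : 0 < c)
    (fc : ℝ → ℝ) (hfc : ∀ t, fc t = if t ≤ 1 then -(t - 1) else c * (t - 1))
    (Div : ℝ → ℝ)
    (hDiv : ∀ θ, Div θ = ∫ x in {x | 0 < p x}, fc (θ * p₁ x / p x) * p x ∂μ) :
    (∀ θ ∈ Set.Icc (0 : ℝ) 1, Div π ≤ Div θ) ↔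
      ∫ x in {x | 0 < p₁ x ∧ π * p₁ x < p x}, p₁ x ∂μ ≤
        c * ∫ x in {x | 0 < p₁ x ∧ π * p₁ x = p x}, p₁ x ∂μ := by
  obtain ⟨hπ0, hπ1⟩ := hπ
  have hc' : -1 ≤ c := by linarith
  have hp₁ : Integrable p₁ μ := .of_integral_ne_zero (by simp [hp₁int])
  have hpneg : Integrable pneg μ := .of_integral_ne_zero (by simp [hpnegint])
  have hpfun : p = fun x => π * p₁ x + (1 - π) * pneg x := funext hp
  have hpint : Integrable p μ := hpfun ▸ (hp₁.const_mul π).add (hpneg.const_mul (1 - π))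
  have hpmeas : Measurable p :=
    hpfun ▸ (hp₁meas.const_mul π).add (hpnegmeas.const_mul (1 - π))
  have hle : ∀ x, π * p₁ x ≤ p x := fun x => by rw [hp]; nlinarith [hpnegnonneg x]
  have hDiv' : ∀ θ, Div θ = ∫ x, hinge c (θ * p₁ x - p x) ∂μ := fun θ => by
    rw [hDiv, ← setIntegral_hinge_div_sub_one_mul hpmeas hπ0 hp₁nonneg hle]
    simp only [hfc, hinge_sub_one hc']
  rw [← sub_nonneg, ← integral_mul_hingeRightDeriv c hp₁ hpmeas hp₁meas hp₁nonneg hle]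
  constructor
  · intro hmin
    refine (hasDerivWithinAt_integral_hinge_mul_sub hc' hpint hp₁ hp₁nonneg π)
      |>.nonneg_of_isLocalMinOn ?_
    filter_upwards [Ioc_mem_nhdsGT hπ1] with θ hθ
    simpa only [hDiv'] using hmin θ ⟨by linarith [hθ.1], hθ.2⟩
  · intro hd θ _
    rw [hDiv', hDiv']
    rcases le_total θ π with hθπ | hπθ
    · exact integral_hinge_mul_sub_le_of_le hc' hpint hp₁ hp₁nonneg hle hθπ
    · nlinarith [integral_hinge_add_mul_le hc' hpint hp₁ π θ]
end

section
/- Let μ be a measure on a measurable space X, let p₁ and p₋₁ be nonnegative measurable probability densities with ∫ p₁ dμ = ∫ p₋₁ dμ = 1, let π ∈ (0,1), and set p = π·p₁ + (1−π)·p₋₁. Define D₁ = {x : p(x) > 0 and π·p₁(x) = p(x)} and assume μ(D₁) > 0. Then: (i) π = sup{θ ∈ [0,1] : θ·p₁(x) ≤ p(x) for μ-almost every x}; and (ii) for every θ ∈ [0,1] with θ·p₁ ≤ p μ-almost everywhere, ∫_{p>0} (1 − θ·p₁(x)/p(x))·p(x) dμ(x) = 1 − θ, so π is the unique minimizer over such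 feasible θ of the penalized L₁-divergence Div(θ) = ∫_{p>0} f̃(θ·p₁/p)·p dμ with f̃(t) = 1 − t on [0,1]. -/
open MeasureTheory

/-- If the non-overlap region has positive measure, the class prior π equals the supremum
of the feasible mixing coefficients, the penalized L₁ objective equals 1 − θ on feasible θ,
and π is the unique minimizer of the penalized L₁ objective among feasible θ. -/
theorem penalized_L1_recovers_prior
    {X : Type*} [MeasurableSpace X] (μ : Measure X)
    (p₁ pneg : X → ℝ) (hp₁meas : Measurable p₁) (hpnegmeas : Measurable pneg)
    (hp₁nonneg : ∀ x, 0 ≤ p₁ x) (hpnegnonneg : ∀ x, 0 ≤ pneg x)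
    (hp₁int : ∫ x, p₁ x ∂μ = 1) (hpnegint : ∫ x, pneg x ∂μ = 1)
    (π : ℝ) (hπ : π ∈ Set.Ioo (0 : ℝ) 1)
    (p : X → ℝ) (hp : ∀ x, p x = π * p₁ x + (1 - π) * pneg x)
    (hD₁ : 0 < μ {x | 0 < p x ∧ π * p₁ x = p x}) :
    π = sSup {θ : ℝ | θ ∈ Set.Icc (0 : ℝ) 1 ∧ ∀ᵐ x ∂μ, θ * p₁ x ≤ p x} ∧
    (∀ θ ∈ Set.Icc (0 : ℝ) 1, (∀ᵐ x ∂μ, θ * p₁ x ≤ p x) →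
      ∫ x in {x | 0 < p x}, (1 - θ * p₁ x / p x) * p x ∂μ = 1 - θ) ∧
    (∀ θ ∈ Set.Icc (0 : ℝ) 1, (∀ᵐ x ∂μ, θ * p₁ x ≤ p x) → θ ≠ π →
      ∫ x in {x | 0 < p x}, (1 - π * p₁ x / p x) * p x ∂μ <
        ∫ x in {x | 0 < p x}, (1 - θ * p₁ x / p x) * p x ∂μ) := by
  obtain ⟨hπ0, hπ1⟩ := hπ
  have hpmeas : Measurable p := by
    have : p = fun x => π * p₁ x + (1 - π) * pneg x := funext hp
    rw [this]
    exact ((hp₁meas.const_mul π).add (hpnegmeas.const_mul (1 - π)))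
  have hpnonneg : ∀ x, 0 ≤ p x := fun x => by
    rw [hp x]
    have := hp₁nonneg x; have := hpnegnonneg x
    nlinarith
  -- π is feasible
  have hπfeas : ∀ x, π * p₁ x ≤ p x := fun x => by
    rw [hp x]
    have := hpnegnonneg x
    nlinarith
  -- any feasible θ satisfies θ ≤ π
  have hle : ∀ θ : ℝ, (∀ᵐ x ∂μ, θ * p₁ x ≤ p x) → θ ≤ π := by
    intro θ hfeas
    by_contra hgt
    push_neg at hgt
    have hnull : μ {x | ¬ θ * p₁ x ≤ p x} = 0 := ae_iff.mp hfeas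
    set D := {x | 0 < p x ∧ π * p₁ x = p x}
    have hsub : μ (D ∩ {x | θ * p₁ x ≤ p x}) ≠ 0 := by
      intro h0
      have : μ D ≤ μ (D ∩ {x | θ * p₁ x ≤ p x}) + μ {x | ¬ θ * p₁ x ≤ p x} := by
        refine le_trans (measure_mono ?_) (measure_union_le _ _)
        intro x hx
        by_cases hx2 : θ * p₁ x ≤ p x
        · exact Or.inl ⟨hx, hx2⟩
        · exact Or.inr hx2
      rw [h0, hnull] at this
      simp at this
      exact hD₁.ne' this
    obtain ⟨x, ⟨⟨hpx, heq⟩, hθx⟩⟩ := nonempty_of_measure_ne_zero hsub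
    have hp₁pos : 0 < p₁ x := by
      by_contra h
      push_neg at h
      have : p₁ x = 0 := le_antisymm h (hp₁nonneg x)
      rw [this] at heq
      simp at heq
      linarith
    have : θ * p₁ x ≤ π * p₁ x := by rw [heq]; exact hθx
    nlinarith
  -- integrability
  have hintp₁ : Integrable p₁ μ := by
    by_contra h
    rw [integral_undef h] at hp₁int
    norm_num at hp₁int
  have hintpneg : Integrable pneg μ := by
    by_contra h
    rw [integral_undef h] at hpnegint
    norm_num at hpnegint
  have hintp : Integrable p μ := by
    have : p = fun x => π * p₁ x + (1 - π) * pneg x := funext hp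
    rw [this]
    exact (hintp₁.const_mul π).add (hintpneg.const_mul (1 - π))
  have hpint : ∫ x, p x ∂μ = 1 := by
    have : p = fun x => π * p₁ x + (1 - π) * pneg x := funext hp
    rw [this, integral_add (hintp₁.const_mul π) (hintpneg.const_mul (1 - π)),
      integral_const_mul, integral_const_mul, hp₁int, hpnegint]
    ring
  set S : Set X := {x | 0 < p x} with hS
  have hSmeas : MeasurableSet S := measurableSet_lt measurable_const hpmeas
  have hcompl : ∀ x ∉ S, p x = 0 ∧ p₁ x = 0 := by
    intro x hx
    simp only [hS, Set.mem_setOf_eq, not_lt] at hx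
    have hpx : p x = 0 := le_antisymm hx (hpnonneg x)
    refine ⟨hpx, ?_⟩
    have h1 := hπfeas x
    rw [hpx] at h1
    have := hp₁nonneg x
    nlinarith
  -- part (ii) as a general fact (feasibility not needed)
  have key : ∀ θ : ℝ, ∫ x in S, (1 - θ * p₁ x / p x) * p x ∂μ = 1 - θ := by
    intro θ
    have hcongr : ∫ x in S, (1 - θ * p₁ x / p x) * p x ∂μ
        = ∫ x in S, (p x - θ * p₁ x) ∂μ := by
      refine setIntegral_congr_fun hSmeas ?_
      intro x hx
      have hpx : p x ≠ 0 := ne_of_gt hx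
      field_simp
    rw [hcongr]
    have hsplit : ∫ x in S, (p x - θ * p₁ x) ∂μ
        = (∫ x in S, p x ∂μ) - θ * ∫ x in S, p₁ x ∂μ := by
      rw [integral_sub hintp.integrableOn ((hintp₁.const_mul θ).integrableOn),
        integral_const_mul]
    rw [hsplit]
    have h1 : ∫ x in S, p x ∂μ = 1 := by
      rw [setIntegral_eq_integral_of_forall_compl_eq_zero (fun x hx => (hcompl x hx).1)]
      exact hpint
    have h2 : ∫ x in S, p₁ x ∂μ = 1 := by
      rw [setIntegral_eq_integral_of_forall_compl_eq_zero (fun x hx => (hcompl x hx).2)]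
      exact hp₁int
    rw [h1, h2]
    ring
  refine ⟨?_, fun θ _ _ => key θ, ?_⟩
  · -- sSup
    set T := {θ : ℝ | θ ∈ Set.Icc (0 : ℝ) 1 ∧ ∀ᵐ x ∂μ, θ * p₁ x ≤ p x}
    have hπT : π ∈ T := ⟨⟨le_of_lt hπ0, le_of_lt hπ1⟩, ae_of_all μ hπfeas⟩
    have hbdd : BddAbove T := ⟨1, fun θ hθ => hθ.1.2⟩
    exact le_antisymm (le_csSup hbdd hπT) (csSup_le ⟨π, hπT⟩ fun θ hθ => hle θ hθ.2)
  · intro θ _ hfeas hne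
    rw [key θ, key π]
    have : θ < π := lt_of_le_of_ne (hle θ hfeas) hne
    linarith
end

section
/- Let μ be a measure on a measurable space X, let p₁ and p be nonnegative measurable functions with ∫ p₁ dμ = ∫ p dμ = 1 and such that p₁(x) = 0 for μ-almost every x with p(x) = 0. Let f : ℝ → ℝ and let f* : ℝ → ℝ be such that f*(z) = sup_{t ∈ ℝ} (t·z − f(t)) for every z in the range of a measurable function r : X → ℝ. Let θ ≥ 0, and assume the functions x ↦ f(θ·p₁(x)/p(x))·p(x) (on {p > 0}), x ↦ r(x)·p₁(x), and x ↦ f*(r(x))·p(x) are μ-integrable. Then ∫_{p>0} f(θ·p₁(x)/p(x))·p(x) dμ(x) ≥ θ·∫ r(x)·p₁(x) dμ(x) − ∫_{p>0} f*(r(x))·p(x) dμ(x). -/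
open MeasureTheory

/-- Fenchel duality lower bound for the f-divergence between the partial model θ·p₁ and p. -/
theorem fenchel_duality_lower_bound
    {X : Type*} [MeasurableSpace X] (μ : Measure X)
    (p₁ p : X → ℝ) (hp₁meas : Measurable p₁) (hpmeas : Measurable p)
    (hp₁nonneg : ∀ x, 0 ≤ p₁ x) (hpnonneg : ∀ x, 0 ≤ p x)
    (hp₁int : ∫ x, p₁ x ∂μ = 1) (hpint : ∫ x, p x ∂μ = 1)
    (habs : ∀ᵐ x ∂μ, p x = 0 → p₁ x = 0)
    (f fstar : ℝ → ℝ) (r : X → ℝ) (hrmeas : Measurable r)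
    (hfstar : ∀ x, IsLUB {y : ℝ | ∃ t : ℝ, y = t * r x - f t} (fstar (r x)))
    (θ : ℝ) (hθ : 0 ≤ θ)
    (hint₁ : IntegrableOn (fun x => f (θ * p₁ x / p x) * p x) {x | 0 < p x} μ)
    (hint₂ : Integrable (fun x => r x * p₁ x) μ)
    (hint₃ : IntegrableOn (fun x => fstar (r x) * p x) {x | 0 < p x} μ) :
    θ * ∫ x, r x * p₁ x ∂μ - ∫ x in {x | 0 < p x}, fstar (r x) * p x ∂μ ≤
      ∫ x in {x | 0 < p x}, f (θ * p₁ x / p x) * p x ∂μ := by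
  set s : Set X := {x | 0 < p x} with hs
  have hsmeas : MeasurableSet s := measurableSet_lt measurable_const hpmeas
  -- restrict the first integral to s
  have h1 : ∫ x, r x * p₁ x ∂μ = ∫ x in s, r x * p₁ x ∂μ := by
    rw [← integral_indicator hsmeas]
    refine integral_congr_ae ?_
    filter_upwards [habs] with x hx
    by_cases hxs : x ∈ s
    · simp [Set.indicator_of_mem hxs]
    · have hp0 : p x = 0 := le_antisymm (not_lt.mp hxs) (hpnonneg x)
      simp [Set.indicator_of_notMem hxs, hx hp0]
  rw [h1, ← integral_const_mul, ← integral_sub ((hint₂.restrict).const_mul θ) hint₃]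
  refine setIntegral_mono_on (((hint₂.restrict).const_mul θ).sub hint₃) hint₁ hsmeas ?_
  intro x hx
  have hpx : 0 < p x := hx
  have hmem : (θ * p₁ x / p x) * r x - f (θ * p₁ x / p x) ∈
      {y : ℝ | ∃ t : ℝ, y = t * r x - f t} := ⟨_, rfl⟩
  have hle : (θ * p₁ x / p x) * r x - f (θ * p₁ x / p x) ≤ fstar (r x) :=
    (hfstar x).1 hmem
  have key : (θ * p₁ x / p x) * r x * p x - f (θ * p₁ x / p x) * p x ≤
      fstar (r x) * p x := by
    have := mul_le_mul_of_nonneg_right hle hpx.le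
    linarith [this, sub_mul ((θ * p₁ x / p x) * r x) (f (θ * p₁ x / p x)) (p x)]
  have hcancel : (θ * p₁ x / p x) * r x * p x = θ * (r x * p₁ x) := by
    field_simp
  linarith [key, hcancel ▸ key]
end

section
/- Let b be a positive integer, λ > 0, let Φ ⊆ ℝ^b be a nonempty closed convex set with B = sup_{α ∈ Φ} ‖α‖₂ < ∞, and let β, β′ ∈ ℝ^b with ‖β′‖₂ ≤ √b. Let α be the minimizer over Φ of (λ/2)·‖·‖₂² − ⟨·, β⟩ and α′ the minimizer over Φ of (λ/2)·‖·‖₂² − ⟨·, β′⟩. Then |⟨α′, β′⟩ − ⟨α, β⟩| ≤ (2b/λ + B·√b)·(‖β′ − β‖₂/√b); in particular, if additionally ‖β′ − β‖₂ ≤ √b·ε for some ε ≥ 0, then |⟨α′, β′⟩ − ⟨α, β⟩| ≤ (2b/λ + B·√b)·ε. -/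
/-!
Both minimizers lie in the convex set `Φ` on which `x ↦ (λ/2)‖x‖² - ⟪x, β⟫` is `λ`-strongly convex,
so comparing each objective at the other's minimizer gives `(λ/2)‖α' - α‖² ≤ ⟪α' - α, β' - β⟫`,
hence `‖α' - α‖ ≤ (2/λ)‖β' - β‖`. Writing `⟪α', β'⟫ - ⟪α, β⟫ = ⟪α' - α, β'⟫ + ⟪α, β' - β⟫` and
using `‖β'‖ ≤ √b`, `‖α‖ ≤ B` bounds the change of the optimal value.
-/

open scoped RealInnerProductSpace

section NormedSpace

variable {E : Type*} [NormedAddCommGroup E] [NormedSpace ℝ E] {s : Set E} {f : E → ℝ} {m : ℝ}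
  {x y : E}

lemma StrongConvexOn.add_sq_le_of_isMinOn (hf : StrongConvexOn s m f) (hx : IsMinOn f s x)
    (hxs : x ∈ s) (hys : y ∈ s) : f x + m / 4 * ‖x - y‖ ^ 2 ≤ f y := by
  have hmid := hf.2 hxs hys (by norm_num) (by norm_num) (add_halves (1 : ℝ))
  have hmin_mid := isMinOn_iff.1 hx _ (hf.1 hxs hys (by norm_num) (by norm_num) (add_halves (1 : ℝ)))
  simp only [smul_eq_mul] at hmid
  linarith

end NormedSpace

section InnerProductSpace

variable {E : Type*} [NormedAddCommGroup E] [InnerProductSpace ℝ E] {s : Set E} {m : ℝ}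

lemma strongConvexOn_sq_norm_sub_inner (hs : Convex ℝ s) (m : ℝ) (β : E) :
    StrongConvexOn s m fun x ↦ m / 2 * ‖x‖ ^ 2 - ⟪x, β⟫ := by
  refine strongConvexOn_iff_convex.2 ?_
  simp only [sub_sub_cancel_left]
  exact (-innerₛₗ ℝ β).convexOn hs |>.congr fun x _ ↦ by simp [real_inner_comm]

lemma mul_sq_norm_sub_le_inner_of_isMinOn (hs : Convex ℝ s) {α α' β β' : E}
    (hα : α ∈ s) (hα' : α' ∈ s)
    (hmin : IsMinOn (fun x ↦ m / 2 * ‖x‖ ^ 2 - ⟪x, β⟫) s α)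
    (hmin' : IsMinOn (fun x ↦ m / 2 * ‖x‖ ^ 2 - ⟪x, β'⟫) s α') :
    m / 2 * ‖α' - α‖ ^ 2 ≤ ⟪α' - α, β' - β⟫ := by
  have h := (strongConvexOn_sq_norm_sub_inner hs m β).add_sq_le_of_isMinOn hmin hα hα'
  have h' := (strongConvexOn_sq_norm_sub_inner hs m β').add_sq_le_of_isMinOn hmin' hα' hα
  simp only [inner_sub_left, inner_sub_right, norm_sub_rev α] at h h' ⊢
  linarith

lemma norm_sub_le_of_isMinOn (hs : Convex ℝ s) (hm : 0 < m) {α α' β β' : E}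
    (hα : α ∈ s) (hα' : α' ∈ s)
    (hmin : IsMinOn (fun x ↦ m / 2 * ‖x‖ ^ 2 - ⟪x, β⟫) s α)
    (hmin' : IsMinOn (fun x ↦ m / 2 * ‖x‖ ^ 2 - ⟪x, β'⟫) s α') :
    ‖α' - α‖ ≤ 2 / m * ‖β' - β‖ := by
  have hquad := (mul_sq_norm_sub_le_inner_of_isMinOn hs hα hα' hmin hmin').trans
    (real_inner_le_norm (α' - α) (β' - β))
  rcases (norm_nonneg (α' - α)).eq_or_lt with hzero | hpos
  · rw [← hzero]
    positivity
  · rw [div_mul_eq_mul_div, le_div_iff₀ hm]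
    nlinarith

lemma abs_inner_sub_inner_le (α α' β β' : E) :
    |⟪α', β'⟫ - ⟪α, β⟫| ≤ ‖α' - α‖ * ‖β'‖ + ‖α‖ * ‖β' - β‖ := by
  calc |⟪α', β'⟫ - ⟪α, β⟫| = |⟪α' - α, β'⟫ + ⟪α, β' - β⟫| := by
        simp only [inner_sub_left, inner_sub_right, sub_add_sub_cancel]
    _ ≤ |⟪α' - α, β'⟫| + |⟪α, β' - β⟫| := abs_add_le _ _
    _ ≤ ‖α' - α‖ * ‖β'‖ + ‖α‖ * ‖β' - β‖ :=
        add_le_add (abs_real_inner_le_norm _ _) (abs_real_inner_le_norm _ _)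

end InnerProductSpace

theorem optimal_value_bounded_difference_general
    (b : ℕ) (hb : 0 < b) (lam : ℝ) (hlam : 0 < lam)
    (Φ : Set (EuclideanSpace ℝ (Fin b)))
    (hΦconv : Convex ℝ Φ)
    (B : ℝ) (hB : IsLUB ((fun γ => ‖γ‖) '' Φ) B)
    (β β' : EuclideanSpace ℝ (Fin b)) (hβ'norm : ‖β'‖ ≤ Real.sqrt b)
    (α α' : EuclideanSpace ℝ (Fin b)) (hα : α ∈ Φ) (hα' : α' ∈ Φ)
    (hmin : ∀ γ ∈ Φ, lam / 2 * ‖α‖ ^ 2 - ⟪α, β⟫ ≤ lam / 2 * ‖γ‖ ^ 2 - ⟪γ, β⟫)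
    (hmin' : ∀ γ ∈ Φ,
      lam / 2 * ‖α'‖ ^ 2 - ⟪α', β'⟫ ≤ lam / 2 * ‖γ‖ ^ 2 - ⟪γ, β'⟫) :
    |⟪α', β'⟫ - ⟪α, β⟫| ≤
        (2 * b / lam + B * Real.sqrt b) * (‖β' - β‖ / Real.sqrt b) ∧
      ∀ ε : ℝ, 0 ≤ ε → ‖β' - β‖ ≤ Real.sqrt b * ε →
        |⟪α', β'⟫ - ⟪α, β⟫| ≤ (2 * b / lam + B * Real.sqrt b) * ε := by
  have hsqrt : 0 < Real.sqrt b := Real.sqrt_pos.2 (by exact_mod_cast hb)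
  have hdist := norm_sub_le_of_isMinOn hΦconv hlam hα hα' (isMinOn_iff.2 hmin) (isMinOn_iff.2 hmin')
  have hαB : ‖α‖ ≤ B := hB.1 (Set.mem_image_of_mem _ hα)
  have hB0 : 0 ≤ B := (norm_nonneg α).trans hαB
  have hmain : |⟪α', β'⟫ - ⟪α, β⟫| ≤
      (2 * b / lam + B * Real.sqrt b) * (‖β' - β‖ / Real.sqrt b) :=
    calc |⟪α', β'⟫ - ⟪α, β⟫| ≤ ‖α' - α‖ * ‖β'‖ + ‖α‖ * ‖β' - β‖ := abs_inner_sub_inner_le _ _ _ _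
      _ ≤ 2 / lam * ‖β' - β‖ * Real.sqrt b + B * ‖β' - β‖ := by gcongr
      _ = (2 * b / lam + B * Real.sqrt b) * (‖β' - β‖ / Real.sqrt b) := by
          field_simp
          linear_combination 2 * ‖β' - β‖ * Real.mul_self_sqrt b.cast_nonneg
  refine ⟨hmain, fun ε _ hε ↦ hmain.trans ?_⟩
  gcongr
  rwa [div_le_iff₀' hsqrt]

/-- Deterministic bounded-difference core of the deviation bound for the penalized
L₁-distance estimator with finite penalty slope: stability of the optimal value
⟨α̂, β̂⟩ under perturbation of the moment vector. -/
theorem optimal_value_bounded_difference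
    (b : ℕ) (hb : 0 < b) (lam : ℝ) (hlam : 0 < lam)
    (Φ : Set (EuclideanSpace ℝ (Fin b))) (hΦne : Φ.Nonempty)
    (hΦclosed : IsClosed Φ) (hΦconv : Convex ℝ Φ)
    (B : ℝ) (hB : IsLUB ((fun γ => ‖γ‖) '' Φ) B)
    (β β' : EuclideanSpace ℝ (Fin b)) (hβ'norm : ‖β'‖ ≤ Real.sqrt b)
    (α α' : EuclideanSpace ℝ (Fin b)) (hα : α ∈ Φ) (hα' : α' ∈ Φ)
    (hmin : ∀ γ ∈ Φ, lam / 2 * ‖α‖ ^ 2 - ⟪α, β⟫ ≤ lam / 2 * ‖γ‖ ^ 2 - ⟪γ, β⟫)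
    (hmin' : ∀ γ ∈ Φ,
      lam / 2 * ‖α'‖ ^ 2 - ⟪α', β'⟫ ≤ lam / 2 * ‖γ‖ ^ 2 - ⟪γ, β'⟫) :
    |⟪α', β'⟫ - ⟪α, β⟫| ≤
        (2 * b / lam + B * Real.sqrt b) * (‖β' - β‖ / Real.sqrt b) ∧
      ∀ ε : ℝ, 0 ≤ ε → ‖β' - β‖ ≤ Real.sqrt b * ε →
        |⟪α', β'⟫ - ⟪α, β⟫| ≤ (2 * b / lam + B * Real.sqrt b) * ε :=
  optimal_value_bounded_difference_general b hb lam hlam Φ hΦconv B hB β β' hβ'norm α α' hα hα' hmin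
    hmin'
end
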